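/- Let τ > 0 and χ ∈ ℝ with −1 < cosh(τ/2) − e^{−χ}/2 < 1, and set A = e^{χ/2 + τ/4}, B = e^{χ/2 − τ/4}. Then the function (u,v) ↦ ln|1 + A e^{iu} + B e^{iv}| is Lebesgue integrable on [0,2π]², and (1/(2π²)) ∫_{0}^{2π} ∫_{0}^{2π} ln|1 + A e^{iu} + B e^{iv}| du dv = ∫_{−∞}^{χ} (1 − θ̄*(τ,s)/π) ds, where θ̄*(τ,s) = arccos( max(−1, min(1, cosh(τ/2) − e^{−s}/2) ) ). -/

import Mathlib

/-! Jensen's formula `∫₀^{2π} log ‖w + b e^{iv}‖ dv = 2π (log b + log⁺ (‖w‖ / b))` integrates one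
circle out of the Ronkin integral. Applying it directly, and again after the flip
`‖1 + A e^{iu}‖ = ‖A + e^{iu}‖` and a swap of the two circles, turns the double integral into
`2π ∫ log⁺ ‖A + B e^{iu}‖ du`, where `‖A + B e^{iu}‖² = e^χ (2 cosh (τ/2) + 2 cos u)`.
On the other side, `π - θ̄*(τ,s)` is the length of `{u ∈ (0, π] | e^{-s} < 2 cosh (τ/2) - 2 cos u}`,
so by Tonelli `∫_{s ≤ χ} (π - θ̄*(τ,s)) ds = ∫₀^π log⁺ (e^χ (2 cosh (τ/2) - 2 cos u)) du`. -/

/-- The clipped angle `θ̄*(τ,s) = arccos(max(-1, min(1, cosh(τ/2) - e^{-s}/2)))`;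
`θ̄*(τ,s)/π` is the limiting density of horizontal tiles at macroscopic position `(τ,s)`. -/
noncomputable def thetaBar (τ s : ℝ) : ℝ :=
  Real.arccos (max (-1) (min 1 (Real.cosh (τ / 2) - Real.exp (-s) / 2)))

open MeasureTheory Set Real
open Complex (I)

theorem integrable_prod_of_le_of_le_integral {α β : Type*} [MeasurableSpace α]
    [MeasurableSpace β] {μ : Measure α} {ν : Measure β} [IsFiniteMeasure μ] [IsFiniteMeasure ν]
    {F : α × β → ℝ} (hF : AEStronglyMeasurable F (μ.prod ν)) {C K : ℝ}
    (hle : ∀ᵐ x ∂μ, ∀ y, F (x, y) ≤ C)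
    (hint : ∀ᵐ x ∂μ, Integrable (fun y ↦ F (x, y)) ν)
    (hge : ∀ᵐ x ∂μ, K ≤ ∫ y, F (x, y) ∂ν) :
    Integrable F (μ.prod ν) := by
  refine (integrable_prod_iff hF).2 ⟨hint, ?_⟩
  refine (integrable_const (2 * max C 0 * ν.real univ - K)).mono' hF.norm.integral_prod_right' ?_
  filter_upwards [hle, hint, hge] with x hxC hxint hxK
  have hnorm : ∀ y, ‖F (x, y)‖ ≤ 2 * max C 0 - F (x, y) := fun y ↦ by
    rw [Real.norm_eq_abs, abs_le]
    constructor <;> linarith [le_max_left C 0, le_max_right C 0, hxC y]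
  calc ‖∫ y, ‖F (x, y)‖ ∂ν‖ = ∫ y, ‖F (x, y)‖ ∂ν :=
        Real.norm_of_nonneg (integral_nonneg fun _ ↦ norm_nonneg _)
    _ ≤ ∫ y, (2 * max C 0 - F (x, y)) ∂ν :=
        integral_mono hxint.norm ((integrable_const _).sub hxint) hnorm
    _ ≤ 2 * max C 0 * ν.real univ - K := by
        rw [integral_sub (integrable_const _) hxint, integral_const, smul_eq_mul]; linarith

theorem intervalIntegrable_log_norm_add_mul_exp (w : ℂ) (R : ℝ) :
    IntervalIntegrable (fun v : ℝ ↦ log ‖w + R * Complex.exp (v * I)‖) volume 0 (2 * π) := by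
  simpa [CircleIntegrable, circleMap, add_comm] using
    circleIntegrable_log_norm_sub_const (a := -w) (c := 0) R

theorem integral_log_norm_add_mul_exp (w : ℂ) {R : ℝ} (hR : R ≠ 0) :
    ∫ v in 0..2 * π, log ‖w + R * Complex.exp (v * I)‖ = 2 * π * (log R + log⁺ (R⁻¹ * ‖w‖)) := by
  have h := circleAverage_log_norm_sub_const_eq_log_radius_add_posLog (a := -w) (c := 0) hR
  simp only [circleAverage_def, circleMap, smul_eq_mul, zero_add, sub_neg_eq_add] at h
  rw [← h, ← mul_assoc, mul_inv_cancel₀ (by positivity), one_mul]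
  congr 1 with v
  rw [add_comm]

section LogNormCircle

variable {φ : ℝ → ℂ} {s : Set ℝ} {R : ℝ}

theorem measurable_log_norm_add_mul_exp (hφ : Continuous φ) (R : ℝ) :
    Measurable fun p : ℝ × ℝ ↦ log ‖φ p.1 + R * Complex.exp (p.2 * I)‖ :=
  measurable_log.comp (by fun_prop)

theorem integrableOn_log_norm_add_mul_exp (hφ : Continuous φ) (hs : IsCompact s) (hR : R ≠ 0) :
    IntegrableOn (fun p : ℝ × ℝ ↦ log ‖φ p.1 + R * Complex.exp (p.2 * I)‖)
      (s ×ˢ Icc 0 (2 * π)) := by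
  obtain ⟨M, hM⟩ := hs.exists_bound_of_continuousOn hφ.continuousOn
  have hfibre (u : ℝ) :
      IntegrableOn (fun v : ℝ ↦ log ‖φ u + R * Complex.exp (v * I)‖) (Icc 0 (2 * π)) :=
    (intervalIntegrable_iff_integrableOn_Icc_of_le (by positivity)).1
      (intervalIntegrable_log_norm_add_mul_exp (φ u) R)
  rw [IntegrableOn, Measure.volume_eq_prod, ← Measure.prod_restrict]
  have : IsFiniteMeasure (volume.restrict s) := isFiniteMeasure_restrict.2 hs.measure_lt_top.ne
  refine integrable_prod_of_le_of_le_integral (C := M + |R|) (K := 2 * π * log R)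
    (measurable_log_norm_add_mul_exp hφ R).aestronglyMeasurable ?_ (.of_forall hfibre) ?_
  · filter_upwards [ae_restrict_mem hs.measurableSet] with u hu v
    calc log ‖φ u + R * Complex.exp (v * I)‖ ≤ ‖φ u + R * Complex.exp (v * I)‖ :=
          log_le_self (norm_nonneg _)
      _ ≤ ‖φ u‖ + ‖(R : ℂ) * Complex.exp (v * I)‖ := norm_add_le _ _
      _ ≤ M + |R| := by simpa [Complex.norm_exp_ofReal_mul_I] using hM u hu
  · refine .of_forall fun u ↦ ?_
    rw [integral_Icc_eq_integral_Ioc, ← intervalIntegral.integral_of_le (by positivity)]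
    dsimp only
    rw [integral_log_norm_add_mul_exp _ hR]
    exact mul_le_mul_of_nonneg_left (le_add_of_nonneg_right posLog_nonneg) (by positivity)

theorem setIntegral_log_norm_add_mul_exp (hφ : Continuous φ) (hs : IsCompact s) (hR : R ≠ 0) :
    ∫ p in s ×ˢ Icc 0 (2 * π), log ‖φ p.1 + R * Complex.exp (p.2 * I)‖ =
      2 * π * ∫ u in s, (log R + log⁺ (R⁻¹ * ‖φ u‖)) := by
  have hint := integrableOn_log_norm_add_mul_exp hφ hs hR
  rw [IntegrableOn, Measure.volume_eq_prod, ← Measure.prod_restrict] at hint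
  rw [Measure.volume_eq_prod, ← Measure.prod_restrict, integral_prod _ hint,
    ← integral_const_mul]
  congr 1 with u
  rw [integral_Icc_eq_integral_Ioc, ← intervalIntegral.integral_of_le (by positivity)]
  exact integral_log_norm_add_mul_exp (φ u) hR

end LogNormCircle

theorem norm_add_mul_exp_sq (a b u : ℝ) :
    ‖(a : ℂ) + b * Complex.exp (u * I)‖ ^ 2 = a ^ 2 + b ^ 2 + 2 * a * b * cos u := by
  rw [Complex.sq_norm, Complex.normSq_apply]
  simp only [Complex.add_re, Complex.add_im, Complex.mul_re, Complex.mul_im, Complex.ofReal_re,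
    Complex.ofReal_im, Complex.exp_ofReal_mul_I_re, Complex.exp_ofReal_mul_I_im]
  nlinarith [sin_sq_add_cos_sq u]

theorem norm_one_add_mul_exp (a u : ℝ) :
    ‖1 + a * Complex.exp (u * I)‖ = ‖a + Complex.exp (u * I)‖ := by
  have h := norm_add_mul_exp_sq 1 a u
  have h' := norm_add_mul_exp_sq a 1 u
  push_cast at h h'
  rw [one_mul] at h'
  exact (sq_eq_sq₀ (norm_nonneg _) (norm_nonneg _)).1 (by rw [h, h']; ring)

theorem integrableOn_log_norm_one_add_add {a b : ℝ} (hb : b ≠ 0) :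
    IntegrableOn
      (fun p : ℝ × ℝ ↦ log ‖1 + a * Complex.exp (p.1 * I) + b * Complex.exp (p.2 * I)‖)
      (Icc 0 (2 * π) ×ˢ Icc 0 (2 * π)) :=
  integrableOn_log_norm_add_mul_exp (φ := fun u ↦ 1 + a * Complex.exp (u * I)) (by fun_prop)
    isCompact_Icc hb

theorem setIntegral_log_norm_one_add_add (a : ℝ) {b : ℝ} (hb : b ≠ 0) :
    ∫ p in Icc 0 (2 * π) ×ˢ Icc 0 (2 * π),
        log ‖1 + a * Complex.exp (p.1 * I) + b * Complex.exp (p.2 * I)‖ =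
      2 * π * ∫ u in 0..2 * π, log⁺ ‖a + b * Complex.exp (u * I)‖ := by
  calc _ = 2 * π * ∫ u in Icc 0 (2 * π),
          (log b + log⁺ (b⁻¹ * ‖1 + a * Complex.exp (u * I)‖)) :=
        setIntegral_log_norm_add_mul_exp (φ := fun u ↦ 1 + a * Complex.exp (u * I))
          (by fun_prop) isCompact_Icc hb
    _ = 2 * π * ∫ u in Icc 0 (2 * π), (log b + log⁺ (b⁻¹ * ‖a + Complex.exp (u * I)‖)) := by
        simp_rw [norm_one_add_mul_exp]
    _ = ∫ p in Icc 0 (2 * π) ×ˢ Icc 0 (2 * π),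
          log ‖a + Complex.exp (p.1 * I) + b * Complex.exp (p.2 * I)‖ :=
        (setIntegral_log_norm_add_mul_exp (φ := fun u ↦ a + Complex.exp (u * I))
          (by fun_prop) isCompact_Icc hb).symm
    _ = ∫ p in Icc 0 (2 * π) ×ˢ Icc 0 (2 * π),
          log ‖a + b * Complex.exp (p.1 * I) + (1 : ℝ) * Complex.exp (p.2 * I)‖ := by
        rw [Measure.volume_eq_prod, ← setIntegral_prod_swap]
        congr 1 with p
        simp only [Prod.fst_swap, Prod.snd_swap, Complex.ofReal_one, one_mul]
        ring_nf
    _ = 2 * π * ∫ u in 0..2 * π, log⁺ ‖a + b * Complex.exp (u * I)‖ := by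
        rw [setIntegral_log_norm_add_mul_exp (φ := fun u ↦ a + b * Complex.exp (u * I))
          (by fun_prop) isCompact_Icc one_ne_zero, integral_Icc_eq_integral_Ioc,
          ← intervalIntegral.integral_of_le (by positivity)]
        simp

theorem integral_comp_cos_zero_two_pi {f : ℝ → ℝ} (hf : Continuous f) :
    ∫ u in 0..2 * π, f (cos u) = 2 * ∫ u in 0..π, f (-cos u) := by
  have hint (a b : ℝ) : IntervalIntegrable (fun u ↦ f (cos u)) volume a b :=
    (hf.comp continuous_cos).intervalIntegrable a b
  have hupper : ∫ u in π..2 * π, f (cos u) = ∫ u in 0..π, f (-cos u) := by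
    simpa [← cos_add_pi, two_mul] using
      (intervalIntegral.integral_comp_add_right (fun u ↦ f (cos u)) π (a := 0) (b := π)).symm
  have hlower : ∫ u in 0..π, f (cos u) = ∫ u in 0..π, f (-cos u) := by
    simpa [← cos_pi_sub] using
      (intervalIntegral.integral_comp_sub_left (fun u ↦ f (cos u)) π (a := 0) (b := π)).symm
  rw [← intervalIntegral.integral_add_adjacent_intervals (hint 0 π) (hint π (2 * π)), hupper,
    hlower, two_mul]

theorem integral_posLog_norm_add_mul_exp (a b : ℝ) :
    ∫ u in 0..2 * π, log⁺ ‖a + b * Complex.exp (u * I)‖ =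
      ∫ u in 0..π, log⁺ (a ^ 2 + b ^ 2 - 2 * a * b * cos u) := by
  have hsq (u : ℝ) : log⁺ ‖a + b * Complex.exp (u * I)‖ =
      2⁻¹ * log⁺ (a ^ 2 + b ^ 2 + 2 * a * b * cos u) := by
    rw [← norm_add_mul_exp_sq, posLog_pow]
    push_cast
    ring
  simp_rw [hsq]
  rw [intervalIntegral.integral_const_mul,
    integral_comp_cos_zero_two_pi (f := fun x ↦ log⁺ (a ^ 2 + b ^ 2 + 2 * a * b * x)) (by fun_prop)]
  simp only [mul_neg, ← sub_eq_add_neg]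
  ring

theorem integral_Iic_measureReal_lt {α : Type*} [MeasurableSpace α] (μ : Measure α)
    [IsFiniteMeasure μ] {g : α → ℝ} (hg : Measurable g) (χ : ℝ) :
    ∫ s in Iic χ, μ.real {x | g x < s} = ∫ x, max (χ - g x) 0 ∂μ := by
  set E : Set (ℝ × α) := {p | g p.2 < p.1}
  have hE : MeasurableSet E := measurableSet_lt (hg.comp measurable_snd) measurable_fst
  have hslice (x : α) : volume.restrict (Iic χ) ((·, x) ⁻¹' E) = ENNReal.ofReal (χ - g x) := by
    rw [Measure.restrict_apply' measurableSet_Iic]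
    exact (congrArg volume (Ioi_inter_Iic (a := g x) (b := χ))).trans Real.volume_Ioc
  calc ∫ s in Iic χ, μ.real {x | g x < s}
      = (∫⁻ s in Iic χ, μ (Prod.mk s ⁻¹' E)).toReal :=
        integral_toReal (measurable_measure_prodMk_left hE).aemeasurable
          (.of_forall fun _ ↦ measure_lt_top μ _)
    _ = (∫⁻ x, ENNReal.ofReal (χ - g x) ∂μ).toReal := by
        rw [← Measure.prod_apply hE, Measure.prod_apply_symm hE]
        simp_rw [hslice]
    _ = ∫ x, max (χ - g x) 0 ∂μ := by
        rw [integral_eq_lintegral_of_nonneg_ae (f := fun x ↦ max (χ - g x) 0)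
          (.of_forall fun _ ↦ le_max_right _ _) (by fun_prop)]
        simp only [ENNReal.ofReal_max, ENNReal.ofReal_zero, zero_le, sup_of_le_left]

theorem setOf_cos_lt_inter_Ioc (x : ℝ) : {u | cos u < x} ∩ Ioc 0 π = Ioc (arccos x) π := by
  ext u
  simp only [mem_inter_iff, mem_ofPred_eq, mem_Ioc]
  constructor
  · rintro ⟨hcos, hu0, huπ⟩
    refine ⟨?_, huπ⟩
    rcases le_or_gt x 1 with hx | hx
    · simpa [arccos_cos hu0.le huπ] using arccos_lt_arccos (neg_one_le_cos u) hcos hx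
    · rwa [arccos_of_one_le hx.le]
  · rintro ⟨hu, huπ⟩
    refine ⟨lt_of_not_ge fun hx ↦ ?_, (arccos_nonneg x).trans_lt hu, huπ⟩
    have := arccos_le_arccos hx
    rw [arccos_cos ((arccos_nonneg x).trans hu.le) huπ] at this
    linarith

theorem arccos_max_neg_one_min_one (x : ℝ) : arccos (max (-1) (min 1 x)) = arccos x := by
  rcases le_total x (-1) with hx | hx
  · rw [arccos_of_le_neg_one hx, arccos_of_le_neg_one (by simp [hx])]
  rcases le_total x 1 with hx' | hx'
  · rw [min_eq_right hx', max_eq_right hx]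
  · rw [arccos_of_one_le hx', min_eq_left hx', max_eq_right (by norm_num), arccos_one]

theorem integral_Iic_pi_sub_arccos {c : ℝ} (hc : 1 < c) (χ : ℝ) :
    ∫ s in Iic χ, (π - arccos (c - exp (-s) / 2)) =
      ∫ u in 0..π, log⁺ (exp χ * (2 * c - 2 * cos u)) := by
  have hpos (u : ℝ) : 0 < 2 * c - 2 * cos u := by linarith [cos_le_one u]
  have hlevel (s : ℝ) : {u | -log (2 * c - 2 * cos u) < s} = {u | cos u < c - exp (-s) / 2} := by
    ext u
    rw [mem_ofPred_eq, mem_ofPred_eq, neg_lt, lt_log_iff_exp_lt (hpos u)]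
    constructor <;> intro h <;> linarith
  have hmeas : Measurable fun u ↦ -log (2 * c - 2 * cos u) := by fun_prop
  calc ∫ s in Iic χ, (π - arccos (c - exp (-s) / 2))
      = ∫ s in Iic χ, (volume.restrict (Ioc 0 π)).real {u | -log (2 * c - 2 * cos u) < s} := by
        congr 1 with s
        rw [measureReal_restrict_apply (measurableSet_lt hmeas measurable_const), hlevel,
          setOf_cos_lt_inter_Ioc, Real.volume_real_Ioc_of_le (arccos_le_pi _)]
    _ = ∫ u in Ioc 0 π, max (χ - -log (2 * c - 2 * cos u)) 0 :=
        integral_Iic_measureReal_lt _ hmeas χ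
    _ = ∫ u in 0..π, log⁺ (exp χ * (2 * c - 2 * cos u)) := by
        rw [intervalIntegral.integral_of_le pi_pos.le]
        congr 1 with u
        rw [posLog_apply, log_mul (exp_ne_zero χ) (hpos u).ne', log_exp, sub_neg_eq_add, max_comm]

theorem integral_one_sub_thetaBar_div_pi {τ : ℝ} (hτ : 0 < τ) (χ : ℝ) :
    ∫ s in Iic χ, (1 - thetaBar τ s / π) =
      π⁻¹ * ∫ u in 0..π, log⁺ (exp χ * (2 * cosh (τ / 2) - 2 * cos u)) := by
  have hθ (s : ℝ) :
      1 - thetaBar τ s / π = π⁻¹ * (π - arccos (cosh (τ / 2) - exp (-s) / 2)) := by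
    rw [thetaBar, arccos_max_neg_one_min_one]
    field_simp
  simp_rw [hθ]
  rw [integral_const_mul, integral_Iic_pi_sub_arccos (one_lt_cosh.2 (by positivity))]

theorem limit_shape_ronkin_general (τ χ : ℝ) (hτ : 0 < τ)
    (A B : ℝ) (hA : A = Real.exp (χ / 2 + τ / 4)) (hB : B = Real.exp (χ / 2 - τ / 4)) :
    MeasureTheory.IntegrableOn
      (fun p : ℝ × ℝ =>
        Real.log (norm
          (1 + (A : ℂ) * Complex.exp ((p.1 : ℂ) * Complex.I) +
            (B : ℂ) * Complex.exp ((p.2 : ℂ) * Complex.I))))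
      (Set.Icc 0 (2 * Real.pi) ×ˢ Set.Icc 0 (2 * Real.pi)) MeasureTheory.volume ∧
    (1 / (2 * Real.pi ^ 2)) *
        ∫ p in Set.Icc (0 : ℝ) (2 * Real.pi) ×ˢ Set.Icc (0 : ℝ) (2 * Real.pi),
          Real.log (norm
            (1 + (A : ℂ) * Complex.exp ((p.1 : ℂ) * Complex.I) +
              (B : ℂ) * Complex.exp ((p.2 : ℂ) * Complex.I))) =
      ∫ s in Set.Iic χ, (1 - thetaBar τ s / Real.pi) := by
  have hB₀ : B ≠ 0 := hB ▸ (exp_pos _).ne'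
  have hAB (u : ℝ) :
      A ^ 2 + B ^ 2 - 2 * A * B * cos u = exp χ * (2 * cosh (τ / 2) - 2 * cos u) := by
    have hA₂ : A ^ 2 = exp χ * exp (τ / 2) := by rw [hA, ← exp_nat_mul, ← exp_add]; ring_nf
    have hB₂ : B ^ 2 = exp χ * exp (-(τ / 2)) := by rw [hB, ← exp_nat_mul, ← exp_add]; ring_nf
    have hAB₁ : A * B = exp χ := by rw [hA, hB, ← exp_add]; ring_nf
    rw [cosh_eq]
    linear_combination hA₂ + hB₂ - 2 * cos u * hAB₁
  refine ⟨integrableOn_log_norm_one_add_add hB₀, ?_⟩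
  rw [setIntegral_log_norm_one_add_add A hB₀, integral_posLog_norm_add_mul_exp,
    integral_one_sub_thetaBar_div_pi hτ]
  simp_rw [hAB]
  field_simp

/-- The Cerf–Kenyon (Ronkin-function) parametrization of the limit shape: for `(τ,χ)`
in the bulk and `A = e^{χ/2+τ/4}`, `B = e^{χ/2-τ/4}`, the function
`(u,v) ↦ ln|1 + A e^{iu} + B e^{iv}|` is integrable on `[0,2π]²` and
`(1/2π²) ∬ ln|1 + A e^{iu} + B e^{iv}| du dv = ∫_{-∞}^{χ} (1 - θ̄*(τ,s)/π) ds`. -/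
theorem limit_shape_ronkin (τ χ : ℝ) (hτ : 0 < τ)
    (hbulk₁ : -1 < Real.cosh (τ / 2) - Real.exp (-χ) / 2)
    (hbulk₂ : Real.cosh (τ / 2) - Real.exp (-χ) / 2 < 1)
    (A B : ℝ) (hA : A = Real.exp (χ / 2 + τ / 4)) (hB : B = Real.exp (χ / 2 - τ / 4)) :
    MeasureTheory.IntegrableOn
      (fun p : ℝ × ℝ =>
        Real.log (norm
          (1 + (A : ℂ) * Complex.exp ((p.1 : ℂ) * Complex.I) +
            (B : ℂ) * Complex.exp ((p.2 : ℂ) * Complex.I))))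
      (Set.Icc 0 (2 * Real.pi) ×ˢ Set.Icc 0 (2 * Real.pi)) MeasureTheory.volume ∧
    (1 / (2 * Real.pi ^ 2)) *
        ∫ p in Set.Icc (0 : ℝ) (2 * Real.pi) ×ˢ Set.Icc (0 : ℝ) (2 * Real.pi),
          Real.log (norm
            (1 + (A : ℂ) * Complex.exp ((p.1 : ℂ) * Complex.I) +
              (B : ℂ) * Complex.exp ((p.2 : ℂ) * Complex.I))) =
      ∫ s in Set.Iic χ, (1 - thetaBar τ s / Real.pi) :=
  limit_shape_ronkin_general τ χ hτ A B hA hB
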